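/- arXiv:2208.04408 — 2 statements merged into one kernel-verified Lean document; each statement's English description precedes it below -/
import Mathlib

section
/- Let G be a finite simple graph on n vertices admitting a partition V(G) = S ∪ D where S is an independent set and D induces a subgraph with independence number at most ℓ. Then G has at most the sum over i ≤ ℓ of binomial(n, i) maximal independent sets. -/
/-!
A maximal independent set is determined by its trace on `D`. If `M ∩ D = M' ∩ D` and `v ∈ M ∩ S`
is not in `M'`, maximality of `M'` gives a neighbour `u ∈ M'` of `v`; as `S` is independent,
`u ∈ M' ∩ D = M ∩ D`, contradicting the independence of `M`. So `M ↦ M ∩ D` is injective on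
maximal independent sets, and its values are independent subsets of `D`, of size at most `ℓ`.
-/

open Finset

/-- `s` is an independent set of `G`. -/
def IsIndepF {V : Type*} (G : SimpleGraph V) (s : Finset V) : Prop :=
  ∀ u ∈ s, ∀ v ∈ s, u ≠ v → ¬ G.Adj u v

/-- `s` is a maximal independent set of `G`. -/
def MaxIndepF {V : Type*} (G : SimpleGraph V) (s : Finset V) : Prop :=
  IsIndepF G s ∧ ∀ t : Finset V, IsIndepF G t → s ⊆ t → t = s

lemma card_le_sum_choose_of_forall_card_le {α : Type*} [Fintype α] [DecidableEq α]
    {𝒜 : Finset (Finset α)} {ℓ : ℕ} (h𝒜 : ∀ s ∈ 𝒜, #s ≤ ℓ) :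
    #𝒜 ≤ ∑ k ∈ range (ℓ + 1), (Fintype.card α).choose k := by
  simp_rw [← card_univ, ← card_powersetCard]
  refine (card_le_card fun s hs ↦ mem_biUnion.2 ⟨#s, ?_⟩).trans card_biUnion_le
  exact ⟨mem_range.2 (Nat.lt_succ_of_le (h𝒜 s hs)), mem_powersetCard_univ.2 rfl⟩

section

variable {V : Type*} {G : SimpleGraph V}

lemma IsIndepF.mono {s t : Finset V} (hs : IsIndepF G s) (hts : t ⊆ s) : IsIndepF G t :=
  fun u hu v hv huv ↦ hs u (hts hu) v (hts hv) huv

lemma IsIndepF.insert [DecidableEq V] {s : Finset V} {v : V} (hs : IsIndepF G s)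
    (hv : ∀ u ∈ s, ¬ G.Adj v u) : IsIndepF G (insert v s) := by
  intro a ha b hb hab
  rcases mem_insert.1 ha with rfl | has <;> rcases mem_insert.1 hb with rfl | hbs
  · exact absurd rfl hab
  · exact hv b hbs
  · exact fun h ↦ hv a has h.symm
  · exact hs a has b hbs hab

lemma MaxIndepF.exists_adj_of_notMem [DecidableEq V] {s : Finset V} {v : V}
    (hs : MaxIndepF G s) (hv : v ∉ s) : ∃ u ∈ s, G.Adj v u := by
  by_contra! hnadj
  exact hv (hs.2 _ (hs.1.insert hnadj) (subset_insert v s) ▸ mem_insert_self v s)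

lemma IsIndepF.subset_of_inter_eq [DecidableEq V] {S D A B : Finset V} (hA : IsIndepF G A)
    (hB : MaxIndepF G B) (hS : IsIndepF G S) (hSD : ∀ v, v ∈ S ∨ v ∈ D)
    (hAB : A ∩ D = B ∩ D) : A ⊆ B := by
  intro v hvA
  rcases hSD v with hvS | hvD
  · by_contra hvB
    obtain ⟨u, huB, hvu⟩ := hB.exists_adj_of_notMem hvB
    rcases hSD u with huS | huD
    · exact hS v hvS u huS hvu.ne hvu
    · have huA : u ∈ A := (mem_inter.1 (hAB ▸ mem_inter.2 ⟨huB, huD⟩)).1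
      exact hA v hvA u huA hvu.ne hvu
  · exact (mem_inter.1 (hAB ▸ mem_inter.2 ⟨hvA, hvD⟩)).1

lemma injOn_inter_maxIndepF [DecidableEq V] {S D : Finset V} (hS : IsIndepF G S)
    (hSD : ∀ v, v ∈ S ∨ v ∈ D) : Set.InjOn (· ∩ D) {s | MaxIndepF G s} :=
  fun _ hA _ hB hAB ↦ (hA.1.subset_of_inter_eq hB hS hSD hAB).antisymm
    (hB.1.subset_of_inter_eq hA hS hSD hAB.symm)

end

theorem stmt3_general {V : Type*} [Fintype V] [DecidableEq V] (G : SimpleGraph V) (ℓ : ℕ)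
    (S D : Finset V) (hpart : S ∪ D = Finset.univ)
    (hS : IsIndepF G S)
    (hD : ∀ s : Finset V, s ⊆ D → IsIndepF G s → s.card ≤ ℓ) :
    (@Finset.filter _ (fun s => MaxIndepF G s) (Classical.decPred _)
        (Finset.univ : Finset (Finset V))).card ≤
      ∑ i ∈ Finset.range (ℓ + 1), Nat.choose (Fintype.card V) i := by
  classical
  have hSD : ∀ v, v ∈ S ∨ v ∈ D := fun v ↦ mem_union.1 (hpart ▸ mem_univ v)
  rw [← card_image_of_injOn (f := (· ∩ D))]
  · refine card_le_sum_choose_of_forall_card_le fun t ht ↦ ?_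
    obtain ⟨M, hM, rfl⟩ := mem_image.1 ht
    exact hD _ inter_subset_right ((mem_filter.1 hM).2.1.mono inter_subset_left)
  · exact fun _ hA _ hB ↦
      injOn_inter_maxIndepF hS hSD (mem_filter.1 hA).2 (mem_filter.1 hB).2

/-- if `V(G) = S ∪ D` with `S` independent and the subgraph
induced on `D` having independence number at most `ℓ` (every independent set
contained in `D` has at most `ℓ` vertices), then `G` has at most
`∑_{i ≤ ℓ} C(n, i)` maximal independent sets. -/
theorem stmt3 {V : Type*} [Fintype V] [DecidableEq V] (G : SimpleGraph V) (ℓ : ℕ)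
    (S D : Finset V) (hpart : S ∪ D = Finset.univ) (hdisj : Disjoint S D)
    (hS : IsIndepF G S)
    (hD : ∀ s : Finset V, s ⊆ D → IsIndepF G s → s.card ≤ ℓ) :
    (@Finset.filter _ (fun s => MaxIndepF G s) (Classical.decPred _)
        (Finset.univ : Finset (Finset V))).card ≤
      ∑ i ∈ Finset.range (ℓ + 1), Nat.choose (Fintype.card V) i :=
  stmt3_general G ℓ S D hpart hS hD
end

section
/- Let G be a finite simple graph and let G' be the graph obtained from G by replacing every edge e = uv with a path u–x_e–y_e–v, where x_e and y_e are new vertices (so u x_e, x_e y_e, y_e v are edges of G' and uv is not). Then α(G') = α(G) + |E(G)|. -/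
open Finset

/-- The independence number of `G`. -/
noncomputable def alphaF {V : Type*} [Fintype V] (G : SimpleGraph V) : ℕ :=
  Finset.sup (@Finset.filter _ (fun s => IsIndepF G s) (Classical.decPred _) Finset.univ)
    Finset.card

/-- The graph `G'` obtained from `G` by replacing every edge `e = uv` by a path
`u — x_e — y_e — v`, where `x_e = Sum.inr (e, false)` and `y_e = Sum.inr (e, true)`
are fresh vertices.  For an edge `e`, `(Quot.out e).1` and `(Quot.out e).2` are its
two endpoints.  `fromRel` symmetrizes; original edges `uv` are not edges of `G'`. -/
def subdiv {V : Type*} (G : SimpleGraph V) : SimpleGraph (V ⊕ (G.edgeSet × Bool)) :=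
  SimpleGraph.fromRel (fun a b =>
    match a, b with
    | Sum.inl u, Sum.inr (e, b) =>
        (b = false ∧ u = (Quot.out (e : Sym2 V)).1) ∨
        (b = true ∧ u = (Quot.out (e : Sym2 V)).2)
    | Sum.inr (e, b), Sum.inr (e', b') => e = e' ∧ b ≠ b'
    | _, _ => False)

/-! Given an independent set `s` of `G`, every edge `e` still has a free subdivision vertex:
`x_e` if its neighbour in `G` is outside `s`, and otherwise `y_e`, whose neighbour then lies
outside `s` by independence; this gives `α(G) + |E(G)|`. Conversely, in an independent set `t`
of `G'` the adjacent vertices `x_e, y_e` contribute at most one vertex per edge, and none when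
both ends of `e` lie in `t`; deleting one end of each such edge from `t ∩ V` leaves an
independent set of `G`, at the cost of one vertex per such edge. -/

namespace SimpleGraph

variable {V : Type*} (G : SimpleGraph V)

noncomputable def edgeSrc (e : G.edgeSet) : V := (Quot.out (e : Sym2 V)).1

noncomputable def edgeTgt (e : G.edgeSet) : V := (Quot.out (e : Sym2 V)).2

lemma mk_edgeSrc_edgeTgt (e : G.edgeSet) : s(G.edgeSrc e, G.edgeTgt e) = e :=
  Quot.out_eq _

lemma adj_edgeSrc_edgeTgt (e : G.edgeSet) : G.Adj (G.edgeSrc e) (G.edgeTgt e) := by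
  rw [← mem_edgeSet, mk_edgeSrc_edgeTgt]
  exact e.2

lemma edgeSrc_mem (e : G.edgeSet) : G.edgeSrc e ∈ (e : Sym2 V) := by
  rw [← mk_edgeSrc_edgeTgt]
  exact Sym2.mem_mk_left _ _

lemma edgeTgt_mem (e : G.edgeSet) : G.edgeTgt e ∈ (e : Sym2 V) := by
  rw [← mk_edgeSrc_edgeTgt]
  exact Sym2.mem_mk_right _ _

noncomputable def edgesInside [Fintype G.edgeSet] [DecidableEq V] (A : Finset V) :
    Finset G.edgeSet :=
  {e | G.edgeSrc e ∈ A ∧ G.edgeTgt e ∈ A}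

end SimpleGraph


section Subdiv

variable {V : Type*} (G : SimpleGraph V)

@[simp]
lemma subdiv_not_adj_inl_inl (u v : V) : ¬ (subdiv G).Adj (.inl u) (.inl v) := by
  simp [subdiv]

@[simp]
lemma subdiv_adj_inl_inr_false (u : V) (e : G.edgeSet) :
    (subdiv G).Adj (.inl u) (.inr (e, false)) ↔ u = G.edgeSrc e := by
  simp [subdiv, SimpleGraph.edgeSrc]

@[simp]
lemma subdiv_adj_inl_inr_true (u : V) (e : G.edgeSet) :
    (subdiv G).Adj (.inl u) (.inr (e, true)) ↔ u = G.edgeTgt e := by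
  simp [subdiv, SimpleGraph.edgeTgt]

@[simp]
lemma subdiv_adj_inr_inr (e e' : G.edgeSet) (b b' : Bool) :
    (subdiv G).Adj (.inr (e, b)) (.inr (e', b')) ↔ e = e' ∧ b ≠ b' := by
  simp only [subdiv, ne_eq, SimpleGraph.fromRel_adj, Sum.inr.injEq, Prod.mk.injEq, not_and]
  tauto

end Subdiv

section Independence

variable {V : Type*} [Fintype V] {G : SimpleGraph V}

lemma IsIndepF.card_le_alphaF {s : Finset V} (hs : IsIndepF G s) : #s ≤ alphaF G :=
  le_sup (f := card) (by classical simpa using hs)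

lemma alphaF_le {n : ℕ} (h : ∀ s : Finset V, IsIndepF G s → #s ≤ n) : alphaF G ≤ n :=
  Finset.sup_le fun s hs => h s (by classical simpa using hs)

variable (G)

lemma exists_isIndepF_card_eq_alphaF : ∃ s : Finset V, IsIndepF G s ∧ #s = alphaF G := by
  classical
  obtain ⟨s, hs, hcard⟩ := exists_mem_eq_sup {s : Finset V | IsIndepF G s}
    ⟨∅, mem_filter.2 ⟨mem_univ _, by simp [IsIndepF]⟩⟩ card
  exact ⟨s, by simpa using hs, by simpa [alphaF] using hcard.symm⟩

end Independence

section Bounds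

variable {V : Type*} [Fintype V] [DecidableEq V] (G : SimpleGraph V) [DecidableRel G.Adj]

lemma add_card_edgeFinset_le_alphaF_subdiv : alphaF G + #G.edgeFinset ≤ alphaF (subdiv G) := by
  obtain ⟨s, hs, hcard⟩ := exists_isIndepF_card_eq_alphaF G
  -- On the edge `e` take `x_e`, or `y_e` if the neighbour `edgeSrc e` of `x_e` lies in `s`.
  let pick (e : G.edgeSet) : G.edgeSet × Bool := (e, decide (G.edgeSrc e ∈ s))
  have pick_injective : Function.Injective pick := fun _ _ h => congrArg Prod.fst h
  have not_adj_pick (u : V) (hu : u ∈ s) (e : G.edgeSet) :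
      ¬ (subdiv G).Adj (.inl u) (.inr (pick e)) := by
    by_cases he : G.edgeSrc e ∈ s
    · simp only [pick, he, decide_true, subdiv_adj_inl_inr_true]
      rintro rfl
      exact hs _ he _ hu (G.adj_edgeSrc_edgeTgt e).ne (G.adj_edgeSrc_edgeTgt e)
    · simp only [pick, he, decide_false, subdiv_adj_inl_inr_false]
      rintro rfl
      exact he hu
  have hind : IsIndepF (subdiv G) (s.disjSum (univ.image pick)) := by
    rintro (u | p) hx (v | q) hy hne hadj <;>
      simp only [inl_mem_disjSum, inr_mem_disjSum, mem_image, mem_univ, true_and] at hx hy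
    · exact subdiv_not_adj_inl_inl G u v hadj
    · obtain ⟨e, rfl⟩ := hy
      exact not_adj_pick u hx e hadj
    · obtain ⟨e, rfl⟩ := hx
      exact not_adj_pick v hy e hadj.symm
    · obtain ⟨e, rfl⟩ := hx
      obtain ⟨e', rfl⟩ := hy
      obtain ⟨rfl, hb⟩ := (subdiv_adj_inr_inr G _ _ _ _).1 hadj
      exact hb rfl
  calc alphaF G + #G.edgeFinset = #(s.disjSum (univ.image pick)) := by
        rw [card_disjSum, card_image_of_injective _ pick_injective, hcard, card_univ,
          SimpleGraph.edgeFinset_card]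
    _ ≤ alphaF (subdiv G) := hind.card_le_alphaF

lemma card_le_alphaF_add_card_edgesInside (A : Finset V) :
    #A ≤ alphaF G + #(G.edgesInside A) := by
  set srcs := (G.edgesInside A).image G.edgeSrc
  have hind : IsIndepF G (A \ srcs) := by
    intro u hu v hv _ huv
    rw [mem_sdiff] at hu hv
    let e : G.edgeSet := ⟨s(u, v), huv⟩
    have hends : ∀ w ∈ s(u, v), w ∈ A := by
      simp only [Sym2.mem_iff]
      rintro w (rfl | rfl)
      exacts [hu.1, hv.1]
    have hsrc : G.edgeSrc e ∈ srcs := mem_image_of_mem _ <| by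
      simp only [SimpleGraph.edgesInside, mem_filter, mem_univ, true_and]
      exact ⟨hends _ (G.edgeSrc_mem e), hends _ (G.edgeTgt_mem e)⟩
    have : G.edgeSrc e = u ∨ G.edgeSrc e = v := Sym2.mem_iff.1 (G.edgeSrc_mem e)
    rcases this with h | h <;> rw [h] at hsrc
    exacts [hu.2 hsrc, hv.2 hsrc]
  calc #A ≤ #(A \ srcs) + #srcs := card_le_card_sdiff_add_card
    _ ≤ alphaF G + #(G.edgesInside A) := add_le_add hind.card_le_alphaF card_image_le

variable {G} in
lemma IsIndepF.card_toRight_add_card_edgesInside_le {t : Finset (V ⊕ (G.edgeSet × Bool))}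
    (ht : IsIndepF (subdiv G) t) : #t.toRight + #(G.edgesInside t.toLeft) ≤ #G.edgeFinset := by
  have hinj : Set.InjOn Prod.fst (t.toRight : Set (G.edgeSet × Bool)) := by
    rintro ⟨e, b⟩ hp ⟨e', b'⟩ hq (rfl : e = e')
    by_contra hne
    exact ht _ (mem_toRight.1 hp) _ (mem_toRight.1 hq) (by simpa using hne)
      ((subdiv_adj_inr_inr G _ _ _ _).2 ⟨rfl, fun hb => hne (by rw [hb])⟩)
  have hdisj : Disjoint (t.toRight.image Prod.fst) (G.edgesInside t.toLeft) := by
    simp only [disjoint_left, mem_image, mem_toRight, SimpleGraph.edgesInside, mem_filter, mem_univ,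
      true_and, mem_toLeft, not_and]
    rintro _ ⟨⟨e, b⟩, hp, rfl⟩ hsrc htgt
    cases b
    · exact ht _ hsrc _ hp (by simp) ((subdiv_adj_inl_inr_false G _ _).2 rfl)
    · exact ht _ htgt _ hp (by simp) ((subdiv_adj_inl_inr_true G _ _).2 rfl)
  calc #t.toRight + #(G.edgesInside t.toLeft)
      = #(t.toRight.image Prod.fst ∪ G.edgesInside t.toLeft) := by
        rw [card_union_of_disjoint hdisj, card_image_of_injOn hinj]
    _ ≤ #G.edgeFinset := by
        rw [SimpleGraph.edgeFinset_card]
        exact card_le_univ _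

lemma alphaF_subdiv_le : alphaF (subdiv G) ≤ alphaF G + #G.edgeFinset :=
  alphaF_le fun t ht => by
    have := card_le_alphaF_add_card_edgesInside G t.toLeft
    have := ht.card_toRight_add_card_edgesInside_le
    rw [← card_toLeft_add_card_toRight]
    omega

end Bounds

/-- `α(G') = α(G) + |E(G)|` for the edge-subdivision graph `G'`. -/
theorem stmt6 {V : Type*} [Fintype V] [DecidableEq V] (G : SimpleGraph V)
    [DecidableRel G.Adj] :
    alphaF (subdiv G) = alphaF G + G.edgeFinset.card :=
  (alphaF_subdiv_le G).antisymm (add_card_edgeFinset_le_alphaF_subdiv G)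
end
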